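/- Suppose X, Y, A, B, W are jointly distributed finitely-valued random variables such that H(W|X,Y) = 0, I(X,Y : A | W) ≤ δ, and max{H(W|X), H(W|Y)} ≤ δ for some δ ≥ 0. Then I(X:Y) ≤ I(X:Y|A) + I(X:Y|B) + I(A:B) + C·δ for some absolute constant C (one may take C = 6). -/

import Mathlib

open scoped BigOperators

namespace PaperIngleton

open Classical in
/-- Probability of an event under a pmf `p` on a finite sample space. -/
noncomputable def prob {Ω : Type*} [Fintype Ω] (p : Ω → ℝ) (E : Ω → Prop) : ℝ :=
  ∑ ω, if E ω then p ω else 0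

/-- Shannon entropy of a finitely-valued random variable `X` under pmf `p`. -/
noncomputable def ent {Ω S : Type*} [Fintype Ω] [Fintype S] (p : Ω → ℝ) (X : Ω → S) : ℝ :=
  -∑ s : S, prob p (fun ω => X ω = s) * Real.log (prob p (fun ω => X ω = s))

/-- Conditional entropy `H(X|Y)`. -/
noncomputable def condEnt {Ω S T : Type*} [Fintype Ω] [Fintype S] [Fintype T]
    (p : Ω → ℝ) (X : Ω → S) (Y : Ω → T) : ℝ :=
  ent p (fun ω => (X ω, Y ω)) - ent p Y

/-- Mutual information `I(X:Y)`. -/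
noncomputable def mi {Ω S T : Type*} [Fintype Ω] [Fintype S] [Fintype T]
    (p : Ω → ℝ) (X : Ω → S) (Y : Ω → T) : ℝ :=
  ent p X + ent p Y - ent p (fun ω => (X ω, Y ω))

/-- Conditional mutual information `I(X:Y|Z)`. -/
noncomputable def cmi {Ω S T U : Type*} [Fintype Ω] [Fintype S] [Fintype T] [Fintype U]
    (p : Ω → ℝ) (X : Ω → S) (Y : Ω → T) (Z : Ω → U) : ℝ :=
  ent p (fun ω => (X ω, Z ω)) + ent p (fun ω => (Y ω, Z ω))
    - ent p (fun ω => (X ω, Y ω, Z ω)) - ent p Z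

end PaperIngleton

/-!
`A` is almost conditionally independent of `(X, Y)` given `W`, so `I(X:A) ≤ I(W:A) + δ`; and `W` is
almost a common function of `X` and of `Y`, so `H(W|B) ≤ I(X:Y|B) + 2δ`. These two facts are joined
by Shannon inequalities:
`I(X:Y) ≤ I(X:Y|A) + I(X:A)`, `I(W:A) ≤ I(W:A|B) + I(A:B)` and `I(W:A|B) ≤ H(W|B)`,
which already give the bound with `3δ`. Nonnegativity of conditional mutual information, the only
non-linear input, is Gibbs' inequality.
-/

namespace PaperIngleton

open Real

section Basic

variable {Ω S T U : Type*} [Fintype Ω] [Fintype S] [Fintype T] [Fintype U] (p : Ω → ℝ)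

lemma prob_nonneg (hp : ∀ ω, 0 ≤ p ω) (E : Ω → Prop) : 0 ≤ prob p E :=
  Finset.sum_nonneg fun ω _ => by split_ifs <;> simp [hp ω]

lemma le_prob_of_mem (hp : ∀ ω, 0 ≤ p ω) {E : Ω → Prop} {ω : Ω} (hω : E ω) : p ω ≤ prob p E := by
  classical
  calc p ω = if E ω then p ω else 0 := (if_pos hω).symm
    _ ≤ prob p E := Finset.single_le_sum (f := fun ω => if E ω then p ω else 0)
        (fun ω _ => by split_ifs <;> simp [hp ω]) (Finset.mem_univ ω)

lemma sum_prob_mul (X : Ω → S) (f : S → ℝ) :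
    ∑ s, prob p (fun ω => X ω = s) * f s = ∑ ω, p ω * f (X ω) := by
  classical
  simp only [prob, Finset.sum_mul, ite_mul, zero_mul]
  rw [Finset.sum_comm]
  simp

lemma sum_prob (X : Ω → S) : ∑ s, prob p (fun ω => X ω = s) = ∑ ω, p ω := by
  simpa using sum_prob_mul p X (fun _ => 1)

lemma sum_prob_pair_eq_prob {β : Type*} (X : Ω → S) (Z : Ω → β) (b : β) :
    ∑ s, prob p (fun ω => (X ω, Z ω) = (s, b)) = prob p (fun ω => Z ω = b) := by
  classical
  simp only [prob]
  rw [Finset.sum_comm]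
  simp [ite_and]

lemma ent_eq_neg_sum (X : Ω → S) :
    ent p X = -∑ ω, p ω * log (prob p (fun ω' => X ω' = X ω)) := by
  rw [ent, sum_prob_mul p X (fun s => log (prob p (fun ω => X ω = s)))]

lemma prob_congr {E F : Ω → Prop} (h : ∀ ω, E ω ↔ F ω) : prob p E = prob p F :=
  congrArg (prob p) (funext fun ω => propext (h ω))

lemma ent_congr {X : Ω → S} {Y : Ω → T} (h : ∀ ω ω', X ω' = X ω ↔ Y ω' = Y ω) :
    ent p X = ent p Y := by
  simp only [ent_eq_neg_sum, prob_congr p (h _)]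

lemma ent_prod_comm (X : Ω → S) (Y : Ω → T) :
    ent p (fun ω => (X ω, Y ω)) = ent p (fun ω => (Y ω, X ω)) :=
  ent_congr p fun _ _ => by simp only [Prod.mk.injEq]; tauto

lemma sum_mul_log_le_sum_mul_log_prob (hp : ∀ ω, 0 ≤ p ω) (V : Ω → S) (q : S → ℝ)
    (hq : ∀ s, 0 ≤ q s) (hq_pos : ∀ ω, 0 < p ω → 0 < q (V ω)) (hsum : ∑ s, q s ≤ ∑ ω, p ω) :
    ∑ ω, p ω * log (q (V ω)) ≤ ∑ ω, p ω * log (prob p fun ω' => V ω' = V ω) := by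
  set P : S → ℝ := fun s => prob p fun ω => V ω = s
  have hpoint : ∀ ω, p ω * log (q (V ω)) - p ω * log (P (V ω))
      ≤ p ω * (q (V ω) / P (V ω)) - p ω := by
    intro ω
    rcases (hp ω).eq_or_lt with h0 | hpos
    · simp [← h0]
    have hq' := hq_pos ω hpos
    have hP : 0 < P (V ω) := hpos.trans_le (le_prob_of_mem p hp rfl)
    calc p ω * log (q (V ω)) - p ω * log (P (V ω)) = p ω * log (q (V ω) / P (V ω)) := by
          rw [log_div hq'.ne' hP.ne']; ring
      _ ≤ p ω * (q (V ω) / P (V ω) - 1) :=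
          mul_le_mul_of_nonneg_left (log_le_sub_one_of_pos (div_pos hq' hP)) hpos.le
      _ = _ := by ring
  have hratio : ∑ ω, p ω * (q (V ω) / P (V ω)) ≤ ∑ ω, p ω := by
    rw [← sum_prob_mul p V (fun s => q s / P s)]
    refine le_trans (Finset.sum_le_sum fun s _ => ?_) hsum
    rcases (prob_nonneg p hp fun ω => V ω = s).eq_or_lt with h0 | hpos
    · simp [P, ← h0, hq s]
    · exact (mul_div_cancel₀ _ hpos.ne').le
  have hsum_point := Finset.sum_le_sum fun ω (_ : ω ∈ Finset.univ) => hpoint ω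
  simp only [Finset.sum_sub_distrib] at hsum_point
  linarith

lemma cmi_nonneg (hp : ∀ ω, 0 ≤ p ω) (X : Ω → S) (Y : Ω → T) (Z : Ω → U) :
    0 ≤ cmi p X Y Z := by
  set A : S → U → ℝ := fun s u => prob p fun ω => (X ω, Z ω) = (s, u)
  set B : T → U → ℝ := fun t u => prob p fun ω => (Y ω, Z ω) = (t, u)
  set C : U → ℝ := fun u => prob p fun ω => Z ω = u
  -- the law under which `X` and `Y` are conditionally independent given `Z`
  set q : S × T × U → ℝ := fun v => A v.1 v.2.2 * B v.2.1 v.2.2 / C v.2.2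
  have hA : ∀ ω, 0 < p ω → 0 < A (X ω) (Z ω) := fun ω h => h.trans_le (le_prob_of_mem p hp rfl)
  have hB : ∀ ω, 0 < p ω → 0 < B (Y ω) (Z ω) := fun ω h => h.trans_le (le_prob_of_mem p hp rfl)
  have hC : ∀ ω, 0 < p ω → 0 < C (Z ω) := fun ω h => h.trans_le (le_prob_of_mem p hp rfl)
  have hsum : ∑ v, q v = ∑ ω, p ω := by
    have hmarg : ∀ u, (∑ s, A s u) * (∑ t, B t u) / C u = C u := fun u => by
      rw [sum_prob_pair_eq_prob, sum_prob_pair_eq_prob, mul_self_div_self]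
    calc ∑ v, q v = ∑ u, (∑ s, A s u) * (∑ t, B t u) / C u := by
          simp only [q, Fintype.sum_prod_type, Finset.sum_mul_sum, Finset.sum_div]
          exact (Finset.sum_congr rfl fun s _ => Finset.sum_comm).trans Finset.sum_comm
      _ = ∑ ω, p ω := by simp only [hmarg, C, sum_prob]
  have hgibbs := sum_mul_log_le_sum_mul_log_prob p hp (fun ω => (X ω, Y ω, Z ω)) q
    (fun _ => div_nonneg (mul_nonneg (prob_nonneg p hp _) (prob_nonneg p hp _))
      (prob_nonneg p hp _))
    (fun ω hpos => div_pos (mul_pos (hA ω hpos) (hB ω hpos)) (hC ω hpos))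
    hsum.le
  have hlog : ∀ ω, p ω * log (q (X ω, Y ω, Z ω)) = p ω * log (A (X ω) (Z ω))
      + p ω * log (B (Y ω) (Z ω)) - p ω * log (C (Z ω)) := by
    intro ω
    rcases (hp ω).eq_or_lt with h0 | hpos
    · simp [← h0]
    rw [log_div (mul_pos (hA ω hpos) (hB ω hpos)).ne' (hC ω hpos).ne',
      log_mul (hA ω hpos).ne' (hB ω hpos).ne']
    ring
  simp only [hlog, Finset.sum_add_distrib, Finset.sum_sub_distrib] at hgibbs
  rw [cmi, ent_eq_neg_sum, ent_eq_neg_sum, ent_eq_neg_sum, ent_eq_neg_sum]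
  linarith

end Basic

section Shannon

variable {Ω S T U R : Type*} [Fintype Ω] [Fintype S] [Fintype T] [Fintype U] [Fintype R]
  (p : Ω → ℝ)

lemma condEnt_nonneg (hp : ∀ ω, 0 ≤ p ω) (X : Ω → S) (Y : Ω → T) : 0 ≤ condEnt p X Y := by
  have h := cmi_nonneg p hp X X Y
  have e : ent p (fun ω => (X ω, X ω, Y ω)) = ent p (fun ω => (X ω, Y ω)) :=
    ent_congr p fun _ _ => by simp only [Prod.mk.injEq]; tauto
  rw [cmi, e] at h
  rw [condEnt]
  linarith

lemma mi_comm (X : Ω → S) (Y : Ω → T) : mi p X Y = mi p Y X := by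
  rw [mi, mi, ent_prod_comm]
  ring

lemma mi_le_cmi_add_mi (hp : ∀ ω, 0 ≤ p ω) (X : Ω → S) (Y : Ω → T) (Z : Ω → U) :
    mi p X Y ≤ cmi p X Y Z + mi p X Z := by
  have h := cmi_nonneg p hp X Z Y
  have e : ent p (fun ω => (X ω, Z ω, Y ω)) = ent p (fun ω => (X ω, Y ω, Z ω)) :=
    ent_congr p fun _ _ => by simp only [Prod.mk.injEq]; tauto
  rw [cmi, ent_prod_comm p Z Y, e] at h
  rw [mi, mi, cmi]
  linarith

lemma mi_le_mi_prod (hp : ∀ ω, 0 ≤ p ω) (X : Ω → S) (Y : Ω → T) (Z : Ω → U) :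
    mi p X Z ≤ mi p (fun ω => (X ω, Y ω)) Z := by
  have h := cmi_nonneg p hp Y Z X
  have e : ent p (fun ω => (Y ω, Z ω, X ω)) = ent p (fun ω => ((X ω, Y ω), Z ω)) :=
    ent_congr p fun _ _ => by simp only [Prod.mk.injEq]; tauto
  rw [cmi, ent_prod_comm p Y X, ent_prod_comm p Z X, e] at h
  rw [mi, mi]
  linarith

lemma mi_prod_eq_mi_add_cmi (X : Ω → S) (W : Ω → R) (Z : Ω → U) :
    mi p (fun ω => (X ω, W ω)) Z = mi p W Z + cmi p X Z W := by
  have e : ent p (fun ω => ((X ω, W ω), Z ω)) = ent p (fun ω => (X ω, Z ω, W ω)) :=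
    ent_congr p fun _ _ => by simp only [Prod.mk.injEq]; tauto
  rw [mi, mi, cmi, ent_prod_comm p W Z, e]
  ring

lemma cmi_le_condEnt (hp : ∀ ω, 0 ≤ p ω) (X : Ω → S) (Y : Ω → T) (Z : Ω → U) :
    cmi p X Y Z ≤ condEnt p Y Z := by
  have h := condEnt_nonneg p hp Y (fun ω => (X ω, Z ω))
  have e : ent p (fun ω => (Y ω, X ω, Z ω)) = ent p (fun ω => (X ω, Y ω, Z ω)) :=
    ent_congr p fun _ _ => by simp only [Prod.mk.injEq]; tauto
  rw [condEnt, e] at h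
  rw [cmi, condEnt]
  linarith

lemma condEnt_prod_le (hp : ∀ ω, 0 ≤ p ω) (W : Ω → R) (X : Ω → S) (Z : Ω → U) :
    condEnt p W (fun ω => (X ω, Z ω)) ≤ condEnt p W X := by
  have h := cmi_nonneg p hp W Z X
  have e : ent p (fun ω => (W ω, Z ω, X ω)) = ent p (fun ω => (W ω, X ω, Z ω)) :=
    ent_congr p fun _ _ => by simp only [Prod.mk.injEq]; tauto
  rw [cmi, ent_prod_comm p Z X, e] at h
  rw [condEnt, condEnt]
  linarith

lemma condEnt_le_cmi_add_condEnt_add_condEnt (hp : ∀ ω, 0 ≤ p ω) (W : Ω → R) (X : Ω → S)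
    (Y : Ω → T) (Z : Ω → U) :
    condEnt p W Z ≤ cmi p X Y Z + condEnt p W (fun ω => (X ω, Z ω))
      + condEnt p W (fun ω => (Y ω, Z ω)) := by
  have h₁ := cmi_nonneg p hp X Y (fun ω => (W ω, Z ω))
  have h₂ := condEnt_nonneg p hp W (fun ω => (X ω, Y ω, Z ω))
  have e₁ : ent p (fun ω => (X ω, W ω, Z ω)) = ent p (fun ω => (W ω, X ω, Z ω)) :=
    ent_congr p fun _ _ => by simp only [Prod.mk.injEq]; tauto
  have e₂ : ent p (fun ω => (Y ω, W ω, Z ω)) = ent p (fun ω => (W ω, Y ω, Z ω)) :=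
    ent_congr p fun _ _ => by simp only [Prod.mk.injEq]; tauto
  have e₃ : ent p (fun ω => (X ω, Y ω, W ω, Z ω)) = ent p (fun ω => (W ω, X ω, Y ω, Z ω)) :=
    ent_congr p fun _ _ => by simp only [Prod.mk.injEq]; tauto
  rw [cmi, e₁, e₂, e₃] at h₁
  rw [condEnt] at h₂
  rw [cmi, condEnt, condEnt, condEnt]
  linarith

end Shannon

theorem stmt5_general {Ω S T U V R : Type} [Fintype Ω] [Fintype S] [Fintype T] [Fintype U]
    [Fintype V] [Fintype R]
    (p : Ω → ℝ) (hp : ∀ ω, 0 ≤ p ω)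
    (X : Ω → S) (Y : Ω → T) (A : Ω → U) (B : Ω → V) (W : Ω → R)
    (δ : ℝ)
    (hXYA : cmi p (fun ω => (X ω, Y ω)) A W ≤ δ)
    (hWX : max (condEnt p W X) (condEnt p W Y) ≤ δ) :
    mi p X Y ≤ cmi p X Y A + cmi p X Y B + mi p A B + 6 * δ := by
  have hδ : 0 ≤ δ := (cmi_nonneg p hp _ _ _).trans hXYA
  have hWX' : condEnt p W X ≤ δ := (le_max_left _ _).trans hWX
  have hWY' : condEnt p W Y ≤ δ := (le_max_right _ _).trans hWX
  have hXA : mi p X A ≤ mi p A W + δ :=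
    calc mi p X A ≤ mi p (fun ω => (X ω, Y ω)) A := mi_le_mi_prod p hp X Y A
      _ ≤ mi p (fun ω => ((X ω, Y ω), W ω)) A := mi_le_mi_prod p hp _ W A
      _ = mi p A W + cmi p (fun ω => (X ω, Y ω)) A W := by
          rw [mi_prod_eq_mi_add_cmi, mi_comm p W A]
      _ ≤ mi p A W + δ := by linarith
  calc mi p X Y ≤ cmi p X Y A + mi p X A := mi_le_cmi_add_mi p hp X Y A
    _ ≤ cmi p X Y A + cmi p A W B + mi p A B + δ := by
        linarith [mi_le_cmi_add_mi p hp A W B]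
    _ ≤ cmi p X Y A + condEnt p W B + mi p A B + δ := by
        linarith [cmi_le_condEnt p hp A W B]
    _ ≤ cmi p X Y A + cmi p X Y B + mi p A B + 3 * δ := by
        linarith [condEnt_le_cmi_add_condEnt_add_condEnt p hp W X Y B,
          condEnt_prod_le p hp W X B, condEnt_prod_le p hp W Y B]
    _ ≤ cmi p X Y A + cmi p X Y B + mi p A B + 6 * δ := by linarith

theorem stmt5 {Ω S T U V R : Type} [Fintype Ω] [Fintype S] [Fintype T] [Fintype U]
    [Fintype V] [Fintype R]
    (p : Ω → ℝ) (hp : ∀ ω, 0 ≤ p ω) (hp1 : ∑ ω, p ω = 1)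
    (X : Ω → S) (Y : Ω → T) (A : Ω → U) (B : Ω → V) (W : Ω → R)
    (δ : ℝ) (hδ : 0 ≤ δ)
    (hWXY : condEnt p W (fun ω => (X ω, Y ω)) = 0)
    (hXYA : cmi p (fun ω => (X ω, Y ω)) A W ≤ δ)
    (hWX : max (condEnt p W X) (condEnt p W Y) ≤ δ) :
    mi p X Y ≤ cmi p X Y A + cmi p X Y B + mi p A B + 6 * δ :=
  stmt5_general p hp X Y A B W δ hXYA hWX

end PaperIngleton
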